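/- arXiv:2502.18249 — 6 statements merged into one kernel-verified Lean document; each statement's English description precedes it below -/
import Mathlib

section
/- For every p ∈ [0,1] and every mixing weight w ∈ [0,1], the binary-symmetric information after shrinking the conditional probability toward 1/2 does not exceed the original: log 2 − h(1/2 + w·(p − 1/2)) ≤ log 2 − h(p), where h is the binary entropy. In particular, in the paper's binary model both ΔI^a_{X1,Y1} ≥ 0 and ΔI^a_{X2,Y1} ≥ 0, i.e., counterfactual data augmentation never increases the binary-symmetric information of either signal. -/
/-- Shrinking the conditional probability toward `1/2` never increases the
binary-symmetric information: for `p ∈ [0,1]` and weight `w ∈ [0,1]`,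
`log 2 − h(1/2 + w·(p − 1/2)) ≤ log 2 − h(p)`. -/
theorem info_shrink_le (p w : ℝ) (hp : p ∈ Set.Icc (0:ℝ) 1)
    (hw : w ∈ Set.Icc (0:ℝ) 1) :
    Real.log 2 - Real.binEntropy (1/2 + w * (p - 1/2))
      ≤ Real.log 2 - Real.binEntropy p := by
  obtain ⟨hp0, hp1⟩ := hp
  obtain ⟨hw0, hw1⟩ := hw
  have hhalf : (2⁻¹ : ℝ) ∈ Set.Icc (0:ℝ) 1 := by norm_num
  have hpm : p ∈ Set.Icc (0:ℝ) 1 := ⟨hp0, hp1⟩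
  have hcc := (Real.strictConcave_binEntropy.concaveOn).2 hhalf hpm
    (by linarith : (0:ℝ) ≤ 1 - w) hw0 (by ring)
  have hkey : (1 - w) * Real.binEntropy 2⁻¹ + w * Real.binEntropy p
      ≤ Real.binEntropy ((1 - w) * 2⁻¹ + w * p) := hcc
  have hle : Real.binEntropy p ≤ Real.log 2 := Real.binEntropy_le_log_two
  have heq : (1 - w) * 2⁻¹ + w * p = 1/2 + w * (p - 1/2) := by ring
  rw [heq] at hkey
  simp only [Real.binEntropy_two_inv] at hkey
  nlinarith
end

section
/- For every fixed w ∈ [0,1], the information-loss function p ↦ (log 2 − h(p)) − (log 2 − h(1/2 + w·(p − 1/2))) = h(1/2 + w·(p − 1/2)) − h(p) is monotone nondecreasing on the interval [1/2, 1], where h is the binary entropy. -/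
/-! The derivative `h'(t) = log (1 - t) - log t` of the binary entropy is nonpositive and
antitone on `[1/2, 1)`. The mixed point `q = 1/2 + w (p - 1/2)` lies in `[1/2, p]`, so the
derivative of the information loss is `w h'(q) - h'(p) ≥ h'(q) - h'(p) ≥ 0`. -/

open Real Set

lemma deriv_binEntropy_nonpos {p : ℝ} (hp : 1 / 2 ≤ p) : deriv binEntropy p ≤ 0 := by
  rw [deriv_binEntropy, sub_nonpos, ← log_abs (1 - p)]
  rcases eq_or_ne p 1 with rfl | hp1
  · simp
  · exact log_le_log (abs_pos.2 (sub_ne_zero.2 hp1.symm)) (abs_le.2 ⟨by linarith, by linarith⟩)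

lemma deriv_binEntropy_antitoneOn : AntitoneOn (deriv binEntropy) (Ioo 0 1) := by
  intro q ⟨hq0, _⟩ p ⟨_, hp1⟩ hqp
  simp only [deriv_binEntropy]
  gcongr

lemma hasDerivAt_binEntropy_comp_mix_sub {w p : ℝ} (hp : p ∈ Ioo 0 1)
    (hq : 1 / 2 + w * (p - 1 / 2) ∈ Ioo 0 1) :
    HasDerivAt (fun p => binEntropy (1 / 2 + w * (p - 1 / 2)) - binEntropy p)
      (w * deriv binEntropy (1 / 2 + w * (p - 1 / 2)) - deriv binEntropy p) p := by
  have hmix : HasDerivAt (fun p : ℝ => 1 / 2 + w * (p - 1 / 2)) w p := by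
    simpa only [mul_one, id_eq] using
      (((hasDerivAt_id p).sub_const (1 / 2)).const_mul w).const_add (1 / 2)
  have hq' := hasDerivAt_binEntropy hq.1.ne' hq.2.ne
  have hp' := hasDerivAt_binEntropy hp.1.ne' hp.2.ne
  rw [← deriv_binEntropy] at hq' hp'
  exact (hq'.scomp p hmix).sub hp'

lemma half_add_mul_sub_half_mem_Icc {w p : ℝ} (hw : w ∈ Icc 0 1) (hp : 1 / 2 ≤ p) :
    1 / 2 + w * (p - 1 / 2) ∈ Icc (1 / 2) p :=
  ⟨by nlinarith [hw.1], by nlinarith [hw.2]⟩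

/-- For every fixed retained weight `w ∈ [0,1]`, the information-loss function
`p ↦ h(1/2 + w·(p − 1/2)) − h(p)` is monotone nondecreasing on `[1/2, 1]`,
where `h` is the binary entropy. -/
theorem info_loss_monotone (w : ℝ) (hw : w ∈ Set.Icc (0:ℝ) 1) :
    MonotoneOn (fun p : ℝ =>
        Real.binEntropy (1/2 + w * (p - 1/2)) - Real.binEntropy p)
      (Set.Icc (1/2 : ℝ) 1) := by
  refine monotoneOn_of_hasDerivWithinAt_nonneg (convex_Icc _ _) (by fun_prop)
    (f' := fun p => w * deriv binEntropy (1 / 2 + w * (p - 1 / 2)) - deriv binEntropy p) ?_ ?_ <;>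
    intro p hp <;> rw [interior_Icc] at hp <;>
    obtain ⟨hqlo, hqp⟩ := half_add_mul_sub_half_mem_Icc hw hp.1.le
  · have hp01 : p ∈ Ioo 0 1 := ⟨by linarith [hp.1], hp.2⟩
    have hq01 : 1 / 2 + w * (p - 1 / 2) ∈ Ioo 0 1 := ⟨by linarith, by linarith [hp.2]⟩
    exact (hasDerivAt_binEntropy_comp_mix_sub hp01 hq01).hasDerivWithinAt
  · have hanti := deriv_binEntropy_antitoneOn ⟨by linarith, by linarith [hp.2]⟩
      ⟨by linarith [hp.1], hp.2⟩ hqp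
    nlinarith [deriv_binEntropy_nonpos hqlo, hw.2]
end

section
/- Fix α ∈ [0,1] and p1, p2 ∈ (1/2, 1]. Then the CDA success quantity Δ(α, β) = [I(p2) − I(p2^a(α,β))] − [I(p1) − I(p1^a(α,β))] is strictly increasing as a function of β on [0,1]. (This is the paper's claim that increasing the correct-flip rate β helps CDA, Figure 1.) -/
/-- Binary-symmetric information `I(p) = log 2 − h(p)`. -/
noncomputable def Ibs (p : ℝ) : ℝ := Real.log 2 - Real.binEntropy p

/-- Augmented conditional probability of the target signal (Eq. 5). -/
noncomputable def p1aug (p1 α β : ℝ) : ℝ := 1/2 + ((1 - α + β)/2) * (p1 - 1/2)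

/-- Augmented conditional probability of the spurious signal (Eq. 5). -/
noncomputable def p2aug (p2 α β : ℝ) : ℝ := 1/2 + ((1 + α - β)/2) * (p2 - 1/2)

/-- CDA success quantity (Eq. 3):
`Δ(α,β) = [I(p2) − I(p2^a)] − [I(p1) − I(p1^a)]`. -/
noncomputable def cdaDelta (p1 p2 α β : ℝ) : ℝ :=
  (Ibs p2 - Ibs (p2aug p2 α β)) - (Ibs p1 - Ibs (p1aug p1 α β))

lemma Ibs_lt_Ibs {x y : ℝ} (hx : x ∈ Set.Icc (2⁻¹:ℝ) 1) (hy : y ∈ Set.Icc (2⁻¹:ℝ) 1)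
    (h : x < y) : Ibs x < Ibs y := by
  have := Real.binEntropy_strictAntiOn hx hy h
  unfold Ibs; linarith

lemma aug_mem {p c : ℝ} (hp : p ∈ Set.Ioc (1/2 : ℝ) 1) (hc : c ∈ Set.Icc (0:ℝ) 1) :
    1/2 + c * (p - 1/2) ∈ Set.Icc (2⁻¹:ℝ) 1 := by
  obtain ⟨hp1, hp2⟩ := hp
  obtain ⟨hc0, hc1⟩ := hc
  constructor
  · nlinarith
  · nlinarith

/-- For fixed `α ∈ [0,1]` and `p1, p2 ∈ (1/2, 1]`, the CDA success quantity is
strictly increasing in the correct-flip rate `β` on `[0,1]`. -/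
theorem cdaDelta_strictMonoOn_beta (α p1 p2 : ℝ) (hα : α ∈ Set.Icc (0:ℝ) 1)
    (hp1 : p1 ∈ Set.Ioc (1/2 : ℝ) 1) (hp2 : p2 ∈ Set.Ioc (1/2 : ℝ) 1) :
    StrictMonoOn (fun β : ℝ => cdaDelta p1 p2 α β) (Set.Icc (0:ℝ) 1) := by
  obtain ⟨hα0, hα1⟩ := hα
  intro b1 hb1 b2 hb2 hlt
  obtain ⟨hb10, hb11⟩ := hb1
  obtain ⟨hb20, hb21⟩ := hb2
  have hc11 : (1 - α + b1)/2 ∈ Set.Icc (0:ℝ) 1 := by constructor <;> linarith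
  have hc12 : (1 - α + b2)/2 ∈ Set.Icc (0:ℝ) 1 := by constructor <;> linarith
  have hc21 : (1 + α - b1)/2 ∈ Set.Icc (0:ℝ) 1 := by constructor <;> linarith
  have hc22 : (1 + α - b2)/2 ∈ Set.Icc (0:ℝ) 1 := by constructor <;> linarith
  have hm11 := aug_mem hp1 hc11
  have hm12 := aug_mem hp1 hc12
  have hm21 := aug_mem hp2 hc21
  have hm22 := aug_mem hp2 hc22
  have h1 : Ibs (p1aug p1 α b1) < Ibs (p1aug p1 α b2) := by
    apply Ibs_lt_Ibs hm11 hm12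
    nlinarith [hp1.1]
  have h2 : Ibs (p2aug p2 α b2) < Ibs (p2aug p2 α b1) := by
    apply Ibs_lt_Ibs hm22 hm21
    nlinarith [hp2.1]
  simp only [cdaDelta]
  linarith
end

section
/- Fix β ∈ [0,1] and p1, p2 ∈ (1/2, 1]. Then the CDA success quantity Δ(α, β) = [I(p2) − I(p2^a(α,β))] − [I(p1) − I(p1^a(α,β))] is strictly decreasing as a function of the rationale-selection error rate α on [0,1]. -/
lemma Ibs_strictMonoOn : StrictMonoOn Ibs (Set.Icc (2⁻¹:ℝ) 1) := by
  intro x hx y hy hxy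
  have := Real.binEntropy_strictAntiOn hx hy hxy
  simp only [Ibs]
  linarith

/-- For fixed `β ∈ [0,1]` and `p1, p2 ∈ (1/2, 1]`, the CDA success quantity is
strictly decreasing in the rationale-selection error rate `α` on `[0,1]`. -/
theorem cdaDelta_strictAntiOn_alpha (β p1 p2 : ℝ) (hβ : β ∈ Set.Icc (0:ℝ) 1)
    (hp1 : p1 ∈ Set.Ioc (1/2 : ℝ) 1) (hp2 : p2 ∈ Set.Ioc (1/2 : ℝ) 1) :
    StrictAntiOn (fun α : ℝ => cdaDelta p1 p2 α β) (Set.Icc (0:ℝ) 1) := by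
  obtain ⟨hβ0, hβ1⟩ := hβ
  obtain ⟨hp1l, hp1r⟩ := hp1
  obtain ⟨hp2l, hp2r⟩ := hp2
  intro a ha b hb hab
  obtain ⟨ha0, ha1⟩ := ha
  obtain ⟨hb0, hb1⟩ := hb
  have h2mema : p2aug p2 a β ∈ Set.Icc (2⁻¹:ℝ) 1 := by
    constructor <;> (simp only [p2aug]; nlinarith)
  have h2memb : p2aug p2 b β ∈ Set.Icc (2⁻¹:ℝ) 1 := by
    constructor <;> (simp only [p2aug]; nlinarith)
  have h1mema : p1aug p1 a β ∈ Set.Icc (2⁻¹:ℝ) 1 := by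
    constructor <;> (simp only [p1aug]; nlinarith)
  have h1memb : p1aug p1 b β ∈ Set.Icc (2⁻¹:ℝ) 1 := by
    constructor <;> (simp only [p1aug]; nlinarith)
  have h2lt : p2aug p2 a β < p2aug p2 b β := by
    simp only [p2aug]; nlinarith
  have h1lt : p1aug p1 b β < p1aug p1 a β := by
    simp only [p1aug]; nlinarith
  have H2 := Ibs_strictMonoOn h2mema h2memb h2lt
  have H1 := Ibs_strictMonoOn h1memb h1mema h1lt
  simp only [cdaDelta]
  linarith
end

section
/- Fix β ∈ [0,1] and p1, p2 ∈ (1/2, 1], and suppose Δ(0, β) > 0 and Δ(1, β) < 0. Then there exists a unique break-even error rate α* ∈ (0,1) with Δ(α*, β) = 0, and moreover Δ(α, β) > 0 for all α ∈ [0, α*) and Δ(α, β) < 0 for all α ∈ (α*, 1]. (This makes precise the paper's notion of an 'error budget': a threshold error rate below which CDA is beneficial.) -/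
lemma p1aug_mem (p1 α β : ℝ) (hβ : β ∈ Set.Icc (0:ℝ) 1)
    (hp1 : p1 ∈ Set.Ioc (1/2 : ℝ) 1) (hα : α ∈ Set.Icc (0:ℝ) 1) :
    p1aug p1 α β ∈ Set.Icc (2⁻¹ : ℝ) 1 := by
  obtain ⟨hb0, hb1⟩ := hβ; obtain ⟨hp, hp'⟩ := hp1; obtain ⟨ha0, ha1⟩ := hα
  constructor <;> [skip; skip] <;> unfold p1aug <;> nlinarith

lemma p2aug_mem (p2 α β : ℝ) (hβ : β ∈ Set.Icc (0:ℝ) 1)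
    (hp2 : p2 ∈ Set.Ioc (1/2 : ℝ) 1) (hα : α ∈ Set.Icc (0:ℝ) 1) :
    p2aug p2 α β ∈ Set.Icc (2⁻¹ : ℝ) 1 := by
  obtain ⟨hb0, hb1⟩ := hβ; obtain ⟨hp, hp'⟩ := hp2; obtain ⟨ha0, ha1⟩ := hα
  constructor <;> [skip; skip] <;> unfold p2aug <;> nlinarith

lemma cdaDelta_strictAnti (β p1 p2 : ℝ) (hβ : β ∈ Set.Icc (0:ℝ) 1)
    (hp1 : p1 ∈ Set.Ioc (1/2 : ℝ) 1) (hp2 : p2 ∈ Set.Ioc (1/2 : ℝ) 1) :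
    StrictAntiOn (fun α => cdaDelta p1 p2 α β) (Set.Icc (0:ℝ) 1) := by
  intro a ha b hb hab
  have h1 : p1aug p1 b β < p1aug p1 a β := by
    unfold p1aug; nlinarith [hp1.1]
  have h2 : p2aug p2 a β < p2aug p2 b β := by
    unfold p2aug; nlinarith [hp2.1]
  have e1 := Real.binEntropy_strictAntiOn (p1aug_mem p1 b β hβ hp1 hb)
    (p1aug_mem p1 a β hβ hp1 ha) h1
  have e2 := Real.binEntropy_strictAntiOn (p2aug_mem p2 a β hβ hp2 ha)
    (p2aug_mem p2 b β hβ hp2 hb) h2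
  simp only [cdaDelta, Ibs]
  linarith

/-- Error budget: if `Δ(0,β) > 0` and `Δ(1,β) < 0`, there is a unique
break-even error rate `α* ∈ (0,1)` with `Δ(α*,β) = 0`, `Δ > 0` below it on
`[0, α*)` and `Δ < 0` above it on `(α*, 1]`. -/
theorem cdaDelta_error_budget (β p1 p2 : ℝ) (hβ : β ∈ Set.Icc (0:ℝ) 1)
    (hp1 : p1 ∈ Set.Ioc (1/2 : ℝ) 1) (hp2 : p2 ∈ Set.Ioc (1/2 : ℝ) 1)
    (h0 : 0 < cdaDelta p1 p2 0 β) (h1 : cdaDelta p1 p2 1 β < 0) :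
    ∃ αs ∈ Set.Ioo (0:ℝ) 1, cdaDelta p1 p2 αs β = 0 ∧
      (∀ α' ∈ Set.Ioo (0:ℝ) 1, cdaDelta p1 p2 α' β = 0 → α' = αs) ∧
      (∀ α ∈ Set.Ico (0:ℝ) αs, 0 < cdaDelta p1 p2 α β) ∧
      (∀ α ∈ Set.Ioc αs (1:ℝ), cdaDelta p1 p2 α β < 0) := by
  set f : ℝ → ℝ := fun α => cdaDelta p1 p2 α β with hf
  have hanti := cdaDelta_strictAnti β p1 p2 hβ hp1 hp2
  have hcont : Continuous f := by
    show Continuous fun α => cdaDelta p1 p2 α β; unfold cdaDelta Ibs p1aug p2aug; fun_prop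
  have hivt := intermediate_value_Ioo' (le_of_lt zero_lt_one) hcont.continuousOn
  have h0mem : (0:ℝ) ∈ Set.Ioo (f 1) (f 0) := ⟨h1, h0⟩
  obtain ⟨αs, hαs, hfαs⟩ := hivt h0mem
  have hαsIcc : αs ∈ Set.Icc (0:ℝ) 1 := ⟨le_of_lt hαs.1, le_of_lt hαs.2⟩
  have hz : cdaDelta p1 p2 αs β = 0 := hfαs
  refine ⟨αs, hαs, hz, ?_, ?_, ?_⟩
  · intro α' hα' hα'0
    rcases lt_trichotomy α' αs with h | h | h
    · have := hanti ⟨le_of_lt hα'.1, le_of_lt hα'.2⟩ hαsIcc h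
      simp only at this; linarith
    · exact h
    · have := hanti hαsIcc ⟨le_of_lt hα'.1, le_of_lt hα'.2⟩ h
      simp only at this; linarith
  · intro α hα
    have := hanti ⟨hα.1, le_of_lt (lt_of_lt_of_le hα.2 hαsIcc.2)⟩ hαsIcc hα.2
    simp only at this; linarith
  · intro α hα
    have := hanti hαsIcc ⟨le_of_lt (lt_of_le_of_lt hαsIcc.1 hα.1), hα.2⟩ hα.1
    simp only at this; linarith
end

section
/- Fix p1, p2 ∈ (1/2, 1]. With the ICDA assumption β = 1 − α, the operator J sending the current error rate to the augmented information gap, δ^a(α) := I(1/2 + (1−α)·(p1 − 1/2)) − I(1/2 + α·(p2 − 1/2)), is strictly decreasing on [0,1]. -/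
/-- Augmented information gap under the ICDA assumption `β = 1 − α`
(operator `J`): `δ^a(α) = I(1/2 + (1−α)(p1 − 1/2)) − I(1/2 + α(p2 − 1/2))`. -/
noncomputable def deltaAug (p1 p2 α : ℝ) : ℝ :=
  Ibs (1/2 + (1 - α) * (p1 - 1/2)) - Ibs (1/2 + α * (p2 - 1/2))

/-- For `p1, p2 ∈ (1/2, 1]`, the augmented information gap `δ^a` is strictly
decreasing in the error rate `α` on `[0,1]`. -/
theorem deltaAug_strictAntiOn (p1 p2 : ℝ) (hp1 : p1 ∈ Set.Ioc (1/2 : ℝ) 1)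
    (hp2 : p2 ∈ Set.Ioc (1/2 : ℝ) 1) :
    StrictAntiOn (fun α : ℝ => deltaAug p1 p2 α) (Set.Icc (0:ℝ) 1) := by
  obtain ⟨hp1l, hp1r⟩ := hp1
  obtain ⟨hp2l, hp2r⟩ := hp2
  intro x hx y hy hxy
  obtain ⟨hx0, hx1⟩ := hx
  obtain ⟨hy0, hy1⟩ := hy
  have memA : ∀ t : ℝ, 0 ≤ t → t ≤ 1 →
      (1/2 + (1 - t) * (p1 - 1/2)) ∈ Set.Icc (2⁻¹ : ℝ) 1 := by
    intro t ht0 ht1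
    constructor
    · nlinarith
    · nlinarith
  have memB : ∀ t : ℝ, 0 ≤ t → t ≤ 1 →
      (1/2 + t * (p2 - 1/2)) ∈ Set.Icc (2⁻¹ : ℝ) 1 := by
    intro t ht0 ht1
    constructor
    · nlinarith
    · nlinarith
  have ha : Real.binEntropy (1/2 + (1 - x) * (p1 - 1/2)) <
      Real.binEntropy (1/2 + (1 - y) * (p1 - 1/2)) :=
    Real.binEntropy_strictAntiOn (memA y hy0 hy1) (memA x hx0 hx1) (by nlinarith)
  have hb : Real.binEntropy (1/2 + y * (p2 - 1/2)) <
      Real.binEntropy (1/2 + x * (p2 - 1/2)) :=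
    Real.binEntropy_strictAntiOn (memB x hx0 hx1) (memB y hy0 hy1) (by nlinarith)
  simp only [deltaAug, Ibs]
  linarith
end
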